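/- arXiv:0709.3185 — 7 statements merged into one kernel-verified Lean document; each statement's English description precedes it below -/
import Mathlib

section
/- If G is a finite nilpotent group of class at most 2 generated by 2 elements, then |G| = |G'|^2 · |Z(G)|, where G' is the derived subgroup and Z(G) is the center. -/
/-!
In a group of class at most two the map `g ↦ ⁅g, x⁆` is a homomorphism for every `x`.
For `G = ⟨a, b⟩` the pair `g ↦ (⁅g, a⁆, ⁅g, b⁆)` is then a homomorphism `G → G × G`
whose kernel is the center. Its image is `G' × G'` with `G' = ⟨⁅a, b⁆⟩`, since
`a ↦ (1, ⁅a, b⁆)` and `b ↦ (⁅a, b⁆⁻¹, 1)`. Hence `G ⧸ Z(G) ≃ G' × G'`.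
-/

open scoped commutatorElement
open Subgroup

theorem MonoidHom.range_le_of_closure_eq_top {G N : Type*} [Group G] [Group N] {s : Set G}
    (hs : closure s = ⊤) {f : G →* N} {K : Subgroup N} (h : ∀ x ∈ s, f x ∈ K) :
    f.range ≤ K := by
  rw [f.range_eq_map, ← hs, MonoidHom.map_closure, closure_le]
  rintro _ ⟨x, hx, rfl⟩
  exact h x hx

section ClassTwo

variable {G : Type*} [Group G]

theorem commutatorElement_mem_center (hG : commutator G ≤ center G) (g h : G) :
    ⁅g, h⁆ ∈ center G :=
  hG (commutator_mem_commutator (mem_top g) (mem_top h))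

theorem commutatorElement_mul_left_of_le_center (hG : commutator G ≤ center G) (g h x : G) :
    ⁅g * h, x⁆ = ⁅g, x⁆ * ⁅h, x⁆ := by
  have hhx := mem_center_iff.mp (commutatorElement_mem_center hG h x)
  rw [commutatorElement_mul_left_eq_conj_mul, hhx g, mul_inv_cancel_right, hhx]

def commutatorHom (hG : commutator G ≤ center G) (x : G) : G →* G where
  toFun g := ⁅g, x⁆
  map_one' := commutatorElement_one_left x
  map_mul' g h := commutatorElement_mul_left_of_le_center hG g h x

@[simp]
theorem commutatorHom_apply (hG : commutator G ≤ center G) (x g : G) :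
    commutatorHom hG x g = ⁅g, x⁆ := rfl

theorem ker_commutatorHom (hG : commutator G ≤ center G) (x : G) :
    (commutatorHom hG x).ker = centralizer {x} := by
  ext g
  rw [MonoidHom.mem_ker, commutatorHom_apply, commutatorElement_eq_one_iff_commute,
    mem_centralizer_singleton_iff, Commute, SemiconjBy, eq_comm]

def commutatorPairHom (hG : commutator G ≤ center G) (a b : G) : G →* G × G :=
  (commutatorHom hG a).prod (commutatorHom hG b)

variable {a b : G}

theorem commutatorElement_mem_zpowers (hG : commutator G ≤ center G) (hab : closure {a, b} = ⊤)
    (g x : G) : ⁅g, x⁆ ∈ zpowers ⁅a, b⁆ := by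
  have against_generator :
      ∀ y ∈ ({a, b} : Set G), ∀ g : G, ⁅g, y⁆ ∈ zpowers ⁅a, b⁆ := by
    intro y hy g
    refine MonoidHom.range_le_of_closure_eq_top hab (f := commutatorHom hG y)
      (fun z hz => ?_) ⟨g, rfl⟩
    simp only [Set.mem_insert_iff, Set.mem_singleton_iff] at hy hz
    rcases hy with hy | hy <;> rcases hz with hz | hz <;>
      simp only [hy, hz, commutatorHom_apply, commutatorElement_self,
        ← commutatorElement_inv a b] <;>
      first | exact one_mem _ | exact mem_zpowers _ | exact inv_mem (mem_zpowers _)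
  refine MonoidHom.range_le_of_closure_eq_top hab (f := commutatorHom hG x)
    (fun y hy => ?_) ⟨g, rfl⟩
  rw [commutatorHom_apply, ← commutatorElement_inv x y]
  exact inv_mem (against_generator y hy x)

theorem commutator_eq_zpowers (hG : commutator G ≤ center G) (hab : closure {a, b} = ⊤) :
    commutator G = zpowers ⁅a, b⁆ :=
  le_antisymm
    (commutator_le.mpr fun g _ x _ => commutatorElement_mem_zpowers hG hab g x)
    (zpowers_le.mpr (commutator_mem_commutator (mem_top a) (mem_top b)))

theorem ker_commutatorPairHom (hG : commutator G ≤ center G) (hab : closure {a, b} = ⊤) :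
    (commutatorPairHom hG a b).ker = center G := by
  rw [commutatorPairHom, MonoidHom.ker_prod, ker_commutatorHom, ker_commutatorHom,
    center_eq_iInf hab, iInf_insert, iInf_singleton]

theorem range_commutatorPairHom (hG : commutator G ≤ center G) (hab : closure {a, b} = ⊤) :
    (commutatorPairHom hG a b).range = (zpowers ⁅a, b⁆).prod (zpowers ⁅a, b⁆) := by
  refine le_antisymm ?_ ?_
  · rintro _ ⟨g, rfl⟩
    exact mem_prod.mpr ⟨commutatorElement_mem_zpowers hG hab g a,
      commutatorElement_mem_zpowers hG hab g b⟩
  · rintro ⟨_, _⟩ hxy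
    obtain ⟨⟨m, rfl⟩, ⟨k, rfl⟩⟩ := mem_prod.mp hxy
    have image_a : commutatorPairHom hG a b a = (1, ⁅a, b⁆) := by
      simp [commutatorPairHom]
    have image_b : commutatorPairHom hG a b b = (⁅a, b⁆⁻¹, 1) := by
      simp [commutatorPairHom, commutatorElement_inv]
    refine ⟨b ^ (-m) * a ^ k, ?_⟩
    simp [image_a, image_b, -commutatorElement_inv]

theorem card_quotient_center_eq_sq (hG : commutator G ≤ center G) (hab : closure {a, b} = ⊤) :
    Nat.card (G ⧸ center G) = Nat.card (commutator G) ^ 2 := by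
  rw [← ker_commutatorPairHom hG hab,
    Nat.card_congr (QuotientGroup.quotientKerEquivRange _).toEquiv,
    range_commutatorPairHom hG hab, Nat.card_congr (prodEquiv _ _).toEquiv, Nat.card_prod,
    commutator_eq_zpowers hG hab, sq]

end ClassTwo

theorem stmt_0_general {G : Type*} [Group G]
    (hclass : commutator G ≤ Subgroup.center G)
    (a b : G) (hgen : Subgroup.closure ({a, b} : Set G) = ⊤) :
    Nat.card G = Nat.card (commutator G) ^ 2 * Nat.card (Subgroup.center G) := by
  rw [card_eq_card_quotient_mul_card_subgroup (center G), card_quotient_center_eq_sq hclass hgen]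

/-- If `G` is a finite nilpotent group of class at most 2 (i.e. `G' ≤ Z(G)`) generated by
two elements `a, b`, then `|G| = |G'|² · |Z(G)|`. -/
theorem stmt_0 {G : Type*} [Group G] [Finite G]
    (hclass : commutator G ≤ Subgroup.center G)
    (a b : G) (hgen : Subgroup.closure ({a, b} : Set G) = ⊤) :
    Nat.card G = Nat.card (commutator G) ^ 2 * Nat.card (Subgroup.center G) :=
  stmt_0_general hclass a b hgen
end

section
/- Let G be a finite group of nilpotency class 2 such that exponent of G/G' equals p^r for a prime p > 2. Then the map sending x to x^{p^r} induces an injective homomorphism from G/Ω_r(G) onto G^{p^r}, where Ω_r(G) = {x ∈ G : x^{p^r} = 1}; in particular |G : Ω_r(G)| = |G^{p^r}|. -/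
/-!
Writing `c = ⁅b, a⁆`, centrality of commutators gives `b ^ k * a = c ^ k * a * b ^ k`, and hence
`(a * b) ^ k = c ^ (k.choose 2) * a ^ k * b ^ k`. For `e = exp (G / G')` the power `b ^ e` lies in
`G'`, hence is central, so `c ^ e = ⁅b ^ e, a⁆ = 1`. When `e` is odd, `e ∣ e.choose 2`, so
`x ↦ x ^ e` is a homomorphism; its kernel is `Ω` and its image is the set of `e`-th powers, which
is therefore already a subgroup.
-/

open scoped commutatorElement

section CommutatorCommutes

variable {G : Type*} [Group G] {a b : G}

theorem commutatorElement_pow_left (hb : Commute ⁅b, a⁆ b) (k : ℕ) :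
    ⁅b ^ k, a⁆ = ⁅b, a⁆ ^ k := by
  induction k with
  | zero => simp
  | succ k ih =>
    calc ⁅b ^ (k + 1), a⁆ = b * ⁅b ^ k, a⁆ * b⁻¹ * ⁅b, a⁆ := by
          simp only [commutatorElement_def]; group
      _ = ⁅b, a⁆ ^ (k + 1) := by
          rw [ih, ← (hb.pow_left k).eq, mul_inv_cancel_right, pow_succ]

theorem mul_pow_eq_commutatorElement_pow_choose (ha : Commute ⁅b, a⁆ a) (hb : Commute ⁅b, a⁆ b)
    (k : ℕ) : (a * b) ^ k = ⁅b, a⁆ ^ k.choose 2 * (a ^ k * b ^ k) := by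
  induction k with
  | zero => simp
  | succ k ih =>
    have hswap : b ^ k * a = ⁅b, a⁆ ^ k * (a * b ^ k) := by
      rw [← commutatorElement_pow_left hb]; simp only [commutatorElement_def]; group
    calc (a * b) ^ (k + 1) = ⁅b, a⁆ ^ k.choose 2 * (a ^ k * (b ^ k * a) * b) := by
          rw [pow_succ, ih]; group
      _ = ⁅b, a⁆ ^ (k.choose 2 + k) * (a ^ (k + 1) * b ^ (k + 1)) := by
          rw [hswap, (ha.pow_pow k k).symm.left_comm]
          simp only [mul_assoc, pow_add, pow_succ]
      _ = ⁅b, a⁆ ^ (k + 1).choose 2 * (a ^ (k + 1) * b ^ (k + 1)) := by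
          rw [Nat.choose_succ_succ, Nat.choose_one_right, Nat.add_comm]

end CommutatorCommutes

section ClassTwo

variable {G : Type*} [Group G] (hG : commutator G ≤ Subgroup.center G)
include hG

theorem commute_commutatorElement_of_commutator_le_center (g h x : G) : Commute ⁅g, h⁆ x :=
  (Subgroup.mem_center_iff.mp
    (hG (Subgroup.commutator_mem_commutator (Subgroup.mem_top g) (Subgroup.mem_top h))) x).symm

theorem pow_exponent_quotient_commutator_mem_center (x : G) :
    x ^ Monoid.exponent (G ⧸ commutator G) ∈ Subgroup.center G :=
  hG <| by
    rw [← QuotientGroup.eq_one_iff, QuotientGroup.mk_pow]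
    exact Monoid.pow_exponent_eq_one _

theorem commutatorElement_pow_exponent_quotient_commutator (a b : G) :
    ⁅b, a⁆ ^ Monoid.exponent (G ⧸ commutator G) = 1 := by
  rw [← commutatorElement_pow_left (commute_commutatorElement_of_commutator_le_center hG b a b),
    commutatorElement_eq_one_iff_mul_comm]
  exact (Subgroup.mem_center_iff.mp (pow_exponent_quotient_commutator_mem_center hG b) a).symm

theorem mul_pow_exponent_quotient_commutator (hodd : Odd (Monoid.exponent (G ⧸ commutator G)))
    (a b : G) :
    (a * b) ^ Monoid.exponent (G ⧸ commutator G) =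
      a ^ Monoid.exponent (G ⧸ commutator G) * b ^ Monoid.exponent (G ⧸ commutator G) := by
  set e := Monoid.exponent (G ⧸ commutator G)
  have hchoose : e.choose 2 = e * ((e - 1) / 2) := by
    rw [Nat.choose_two_right, Nat.mul_div_assoc e (Nat.Odd.sub_odd hodd odd_one).two_dvd]
  rw [mul_pow_eq_commutatorElement_pow_choose
      (commute_commutatorElement_of_commutator_le_center hG b a a)
      (commute_commutatorElement_of_commutator_le_center hG b a b),
    hchoose, pow_mul, commutatorElement_pow_exponent_quotient_commutator hG, one_pow, one_mul]

end ClassTwo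

theorem QuotientGroup.range_lift {G M : Type*} [Group G] [Group M] (N : Subgroup G) [N.Normal]
    (φ : G →* M) (HN : N ≤ φ.ker) : (QuotientGroup.lift N φ HN).range = φ.range := by
  conv_rhs => rw [← QuotientGroup.lift_comp_mk' N φ HN]
  rw [MonoidHom.range_comp, QuotientGroup.range_mk', ← MonoidHom.range_eq_map]

theorem stmt_2_general {G : Type*} [Group G] (p r : ℕ) (hodd : Odd p)
    (hclass : commutator G ≤ Subgroup.center G)
    (hexp : Monoid.exponent (G ⧸ commutator G) = p ^ r)
    (Ω : Subgroup G) [Ω.Normal] (hΩ : ∀ x : G, x ∈ Ω ↔ x ^ p ^ r = 1) :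
    ∃ φ : G ⧸ Ω →* G, Function.Injective φ ∧
      (∀ x : G, φ (x : G ⧸ Ω) = x ^ p ^ r) ∧
      φ.range = Subgroup.closure {y : G | ∃ x : G, x ^ p ^ r = y} ∧
      Nat.card (G ⧸ Ω) = Nat.card (Subgroup.closure {y : G | ∃ x : G, x ^ p ^ r = y}) := by
  have hmul : ∀ a b : G, (a * b) ^ p ^ r = a ^ p ^ r * b ^ p ^ r :=
    hexp ▸ mul_pow_exponent_quotient_commutator hclass (hexp ▸ hodd.pow)
  let powHom : G →* G := MonoidHom.mk' (· ^ p ^ r) hmul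
  have hker : Ω = powHom.ker := Subgroup.ext hΩ
  have hinj := (QuotientGroup.injective_lift_iff Ω powHom hker.le).mpr hker
  have hrange : (QuotientGroup.lift Ω powHom hker.le).range =
      Subgroup.closure {y : G | ∃ x : G, x ^ p ^ r = y} := by
    rw [QuotientGroup.range_lift]
    exact (Subgroup.closure_eq powHom.range).symm
  refine ⟨_, hinj, fun _ => rfl, hrange, ?_⟩
  rw [← hrange]
  exact Nat.card_congr (MonoidHom.ofInjective hinj).toEquiv

/-- Let `G` be a finite `p`-group (`p` odd) of nilpotency class at most 2 with
`exp(G/G') = p^r`.  Then `x ↦ x^{p^r}` induces an injective homomorphism from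
`G/Ω_r(G)` onto `G^{p^r}`; in particular `|G : Ω_r(G)| = |G^{p^r}|`. -/
theorem stmt_2 {G : Type*} [Group G] [Finite G] (p r : ℕ) (hp : p.Prime) (hodd : Odd p)
    (hpG : IsPGroup p G) (hclass : commutator G ≤ Subgroup.center G)
    (hexp : Monoid.exponent (G ⧸ commutator G) = p ^ r)
    (Ω : Subgroup G) [Ω.Normal] (hΩ : ∀ x : G, x ∈ Ω ↔ x ^ p ^ r = 1) :
    ∃ φ : G ⧸ Ω →* G, Function.Injective φ ∧
      (∀ x : G, φ (x : G ⧸ Ω) = x ^ p ^ r) ∧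
      φ.range = Subgroup.closure {y : G | ∃ x : G, x ^ p ^ r = y} ∧
      Nat.card (G ⧸ Ω) = Nat.card (Subgroup.closure {y : G | ∃ x : G, x ^ p ^ r = y}) :=
  stmt_2_general p r hodd hclass hexp Ω hΩ
end

section
/- Every E-group is a 2-Engel group; that is, if G is a group in which every element commutes with all of its endomorphic images, then [[x,y],y] = 1 for all x, y ∈ G. -/
open scoped commutatorElement

theorem commutatorElement_commutatorElement_eq_one_of_commute_conj {G : Type*} [Group G]
    {x y : G} (h : Commute y (x * y * x⁻¹)) : ⁅⁅x, y⁆, y⁆ = 1 := by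
  have hxy : Commute y ⁅x, y⁆ := by
    rw [commutatorElement_def]
    exact h.mul_right (Commute.refl y).inv_right
  exact commutatorElement_eq_one_iff_commute.mpr hxy.symm

/-- Every `E`-group is a 2-Engel group: if every element of `G` commutes with all of its
endomorphic images, then `⁅⁅x, y⁆, y⁆ = 1` for all `x, y ∈ G`. -/
theorem stmt_4 {G : Type*} [Group G]
    (hE : ∀ φ : G →* G, ∀ g : G, Commute g (φ g)) :
    ∀ x y : G, ⁅⁅x, y⁆, y⁆ = 1 := fun x y =>
  commutatorElement_commutatorElement_eq_one_of_commute_conj (hE (MulAut.conj x).toMonoidHom y)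
end

section
/- Let G be a non-abelian p-group of class 2 with cyclic derived subgroup such that Ω_r(G) = Z(G) where p^r = exp(G/G'). If p is odd, this leads to a contradiction; hence any such group satisfies p = 2. -/
/-!
For odd `p`, class 2 makes `x ↦ x ^ p ^ r` a homomorphism: in
`(x * y) ^ n = x ^ n * y ^ n * ⁅y, x⁆ ^ n.choose 2` the exponent `n.choose 2` is a multiple of the
odd `n = p ^ r`, and `⁅y, x⁆ ^ n = ⁅y, x ^ n⁆ = 1` because `x ^ n` lies in `G' ≤ Z(G)`. Its image
lies in the cyclic group `G'` and its kernel `Ω_r(G)` is `Z(G)`, so `G / Z(G)` is cyclic and `G` is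
abelian.
-/

open scoped commutatorElement

theorem Odd.dvd_choose_two {n : ℕ} (hn : Odd n) : n ∣ n.choose 2 := by
  obtain ⟨k, rfl⟩ := hn
  rw [Nat.choose_two_right, Nat.add_sub_cancel, mul_left_comm, Nat.mul_div_cancel_left _ two_pos]
  exact dvd_mul_right _ _

section CommutatorCentral

variable {G : Type*} [Group G] {x y : G}

theorem commutatorElement_pow_right (h : Commute ⁅y, x⁆ x) (n : ℕ) :
    ⁅y, x ^ n⁆ = ⁅y, x⁆ ^ n := by
  have hconj : y * x * y⁻¹ = ⁅y, x⁆ * x := by group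
  rw [commutatorElement_def, ← conj_pow, hconj, h.mul_pow, mul_inv_cancel_right]

theorem commutatorElement_pow_left_s5 (h : Commute ⁅y, x⁆ y) (n : ℕ) :
    ⁅y ^ n, x⁆ = ⁅y, x⁆ ^ n := by
  have h' : Commute ⁅x, y⁆ y := by rw [← commutatorElement_inv]; exact h.inv_left
  rw [← commutatorElement_inv, commutatorElement_pow_right h', ← inv_pow, commutatorElement_inv]

theorem mul_pow_eq_mul_pow_mul_commutatorElement_pow (hx : Commute ⁅y, x⁆ x)
    (hy : Commute ⁅y, x⁆ y) (n : ℕ) :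
    (x * y) ^ n = x ^ n * y ^ n * ⁅y, x⁆ ^ n.choose 2 := by
  set c := ⁅y, x⁆
  induction n with
  | zero => simp
  | succ n ih =>
    have hswap : y ^ n * x = c ^ n * x * y ^ n := by
      rw [← commutatorElement_pow_left_s5 hy]; group
    calc (x * y) ^ (n + 1) = x ^ n * (y ^ n * x) * (c ^ n.choose 2 * y) := by
          rw [pow_succ, ih, mul_assoc (x ^ n * y ^ n), ← mul_assoc _ x y, (hx.pow_left _).eq]
          group
      _ = x ^ n * (x * c ^ n) * y ^ n * (y * c ^ n.choose 2) := by
          rw [hswap, (hx.pow_left n).eq, (hy.pow_left _).eq]; group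
      _ = x ^ (n + 1) * (c ^ n * y ^ (n + 1)) * c ^ n.choose 2 := by group
      _ = x ^ (n + 1) * y ^ (n + 1) * c ^ (n + 1).choose 2 := by
          rw [((hy.pow_left n).pow_right (n + 1)).eq, Nat.choose_succ_succ, Nat.choose_one_right]
          group

theorem mul_pow_eq_mul_pow_of_odd (hx : Commute ⁅y, x⁆ x) (hy : Commute ⁅y, x⁆ y) {n : ℕ}
    (hn : Odd n) (h : ⁅y, x⁆ ^ n = 1) : (x * y) ^ n = x ^ n * y ^ n := by
  obtain ⟨k, hk⟩ := hn.dvd_choose_two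
  rw [mul_pow_eq_mul_pow_mul_commutatorElement_pow hx hy, hk, pow_mul, h, one_pow, mul_one]

end CommutatorCentral

namespace Subgroup

variable {G : Type*} [Group G]

theorem pow_exponent_quotient_mem (N : Subgroup G) [N.Normal] (x : G) :
    x ^ Monoid.exponent (G ⧸ N) ∈ N := by
  rw [← QuotientGroup.eq_one_iff, QuotientGroup.mk_pow, Monoid.pow_exponent_eq_one]

end Subgroup

open Subgroup in
theorem mul_pow_of_commutator_le_center {G : Type*} [Group G] (hclass : commutator G ≤ center G)
    {n : ℕ} (hn : Odd n) (hpow : ∀ x : G, x ^ n ∈ center G) (x y : G) :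
    (x * y) ^ n = x ^ n * y ^ n := by
  have hc : ⁅y, x⁆ ∈ center G := hclass (commutator_mem_commutator (mem_top y) (mem_top x))
  have hcn : ⁅y, x⁆ ^ n = 1 := by
    rw [← commutatorElement_pow_right (mem_center_iff.mp hc x).symm,
      commutatorElement_eq_one_iff_mul_comm]
    exact mem_center_iff.mp (hpow x) y
  exact mul_pow_eq_mul_pow_of_odd (mem_center_iff.mp hc x).symm (mem_center_iff.mp hc y).symm hn hcn

theorem stmt_5_general {G : Type*} [Group G] (p r : ℕ) (hp : p.Prime)
    (hclass : commutator G ≤ Subgroup.center G)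
    (hnonab : ∃ x y : G, x * y ≠ y * x)
    (hcyc : IsCyclic (commutator G))
    (hexp : Monoid.exponent (G ⧸ commutator G) = p ^ r)
    (hΩ : ∀ x : G, x ^ p ^ r = 1 ↔ x ∈ Subgroup.center G) :
    p = 2 := by
  rcases hp.eq_two_or_odd' with h2 | hodd
  · exact h2
  exfalso
  have hmem : ∀ x : G, x ^ p ^ r ∈ commutator G := fun x =>
    hexp ▸ Subgroup.pow_exponent_quotient_mem _ x
  let f : G →* commutator G := MonoidHom.mk' (fun x => ⟨x ^ p ^ r, hmem x⟩) fun x y =>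
    Subtype.ext (mul_pow_of_commutator_le_center hclass hodd.pow (fun x => hclass (hmem x)) x y)
  have hker : f.ker ≤ Subgroup.center G := fun x hx => (hΩ x).mp (congrArg Subtype.val hx)
  obtain ⟨a, b, hab⟩ := hnonab
  exact hab ((f.isMulCommutative_of_isCyclic_of_ker_le_center hker).is_comm.comm a b)

/-- Let `G` be a non-abelian finite `p`-group of nilpotency class 2 with cyclic derived
subgroup such that `Ω_r(G) = Z(G)` where `p^r = exp(G/G')`.  Then `p = 2`. -/
theorem stmt_5 {G : Type*} [Group G] [Finite G] (p r : ℕ) (hp : p.Prime)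
    (hpG : IsPGroup p G) (hclass : commutator G ≤ Subgroup.center G)
    (hnonab : ∃ x y : G, x * y ≠ y * x)
    (hcyc : IsCyclic (commutator G))
    (hexp : Monoid.exponent (G ⧸ commutator G) = p ^ r)
    (hΩ : ∀ x : G, x ^ p ^ r = 1 ↔ x ∈ Subgroup.center G) :
    p = 2 :=
  stmt_5_general p r hp hclass hnonab hcyc hexp hΩ
end

section
/- Let G be a group containing a subgroup H isomorphic to Q₈ such that G = H·C_G(H) and C_G(H) = Z(H) × E for an elementary abelian 2-group E. Then G ≅ Q₈ × E. -/
/-!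
`E` centralizes `H`, and it meets `H` trivially because `H ∩ C_G(H) = Z(H)` and `Z(H) ∩ E = 1`.
Since `C_G(H) ≤ H E`, the subgroups `H` and `E` generate `G`, so `G` is their internal direct
product `H × E ≅ Q₈ × E`.
-/

namespace Subgroup

variable {G : Type*} [Group G]

theorem map_subtype_center (H : Subgroup G) :
    (center H).map H.subtype = H ⊓ centralizer (H : Set G) := by
  ext x
  constructor
  · rintro ⟨z, hz, rfl⟩
    exact ⟨z.2, fun h hh => congrArg Subtype.val (mem_center_iff.mp hz ⟨h, hh⟩)⟩
  · rintro ⟨hxH, hxC⟩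
    exact ⟨⟨x, hxH⟩, mem_center_iff.mpr fun h => Subtype.ext (hxC h h.2), rfl⟩

noncomputable def mulEquivProdOfLeCentralizer {H K : Subgroup G}
    (hK : K ≤ centralizer (H : Set G)) (hdisj : Disjoint H K) (hsup : H ⊔ K = ⊤) :
    G ≃* H × K :=
  let comm : ∀ (h : H) (k : K), Commute (H.subtype h) (K.subtype k) :=
    fun h k => mem_centralizer_iff.mp (hK k.2) h h.2
  (MulEquiv.ofBijective (H.subtype.noncommCoprod K.subtype comm)
    ⟨(MonoidHom.noncommCoprod_injective _ _ comm).mpr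
      ⟨H.subtype_injective, K.subtype_injective, by simpa only [range_subtype] using hdisj⟩,
     MonoidHom.range_eq_top.mp <| by
      rw [MonoidHom.noncommCoprod_range, range_subtype, range_subtype, hsup]⟩).symm

end Subgroup

open Subgroup in
theorem stmt_7_general {G : Type*} [Group G] (H E : Subgroup G)
    (hH : Nonempty (H ≃* QuaternionGroup 2))
    (hprod : ∀ g : G, ∃ h ∈ H, ∃ c ∈ Subgroup.centralizer (H : Set G), g = h * c)
    (hcent : Subgroup.centralizer (H : Set G)
        = Subgroup.map H.subtype (Subgroup.center H) ⊔ E)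
    (hdisj : Subgroup.map H.subtype (Subgroup.center H) ⊓ E = ⊥) :
    Nonempty (G ≃* QuaternionGroup 2 × E) := by
  obtain ⟨e⟩ := hH
  have hEC : E ≤ centralizer (H : Set G) := hcent ▸ le_sup_right
  have hCsup : centralizer (H : Set G) ≤ H ⊔ E :=
    hcent ▸ sup_le_sup_right (map_subtype_le _) E
  have hHE : Disjoint H E := by
    rw [disjoint_iff_inf_le, ← hdisj, map_subtype_center]
    exact le_inf (inf_le_inf_left H hEC) inf_le_right
  have hsup : H ⊔ E = ⊤ := by
    refine eq_top_iff.mpr fun g _ => ?_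
    obtain ⟨h, hh, c, hc, rfl⟩ := hprod g
    exact mul_mem (mem_sup_left hh) (hCsup hc)
  exact ⟨(mulEquivProdOfLeCentralizer hEC hHE hsup).trans (e.prodCongr (MulEquiv.refl E))⟩

/-- If `G` contains a subgroup `H ≅ Q₈` with `G = H·C_G(H)` and
`C_G(H) = Z(H) × E` for an elementary abelian 2-group `E`, then `G ≅ Q₈ × E`. -/
theorem stmt_7 {G : Type*} [Group G] (H E : Subgroup G)
    (hH : Nonempty (H ≃* QuaternionGroup 2))
    (hprod : ∀ g : G, ∃ h ∈ H, ∃ c ∈ Subgroup.centralizer (H : Set G), g = h * c)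
    (hE2 : ∀ x ∈ E, x ^ 2 = 1)
    (hcent : Subgroup.centralizer (H : Set G)
        = Subgroup.map H.subtype (Subgroup.center H) ⊔ E)
    (hdisj : Subgroup.map H.subtype (Subgroup.center H) ⊓ E = ⊥) :
    Nonempty (G ≃* QuaternionGroup 2 × E) :=
  stmt_7_general H E hH hprod hcent hdisj
end

section
/- Let G be a group such that every automorphism of G is central and G' = Z(G). Then Aut(G) is abelian. -/
/-!
A central automorphism `φ` moves each `g` by a central factor, `φ g = g * z_φ(g)`. Commutators are
unchanged by central factors, so `φ` fixes `G'`, which here is `Z(G)`. Hence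
`φ (ψ g) = φ g * z_ψ(g) = g * z_φ(g) * z_ψ(g)`, and the two central factors commute.
-/

open scoped commutatorElement

section

variable {G : Type*} [Group G]

theorem commutatorElement_mul_mem_center_left {z : G} (hz : z ∈ Subgroup.center G) (a b : G) :
    ⁅a * z, b⁆ = ⁅a, b⁆ :=
  calc ⁅a * z, b⁆ = a * (z * b) * z⁻¹ * a⁻¹ * b⁻¹ := by group
    _ = a * (b * z) * z⁻¹ * a⁻¹ * b⁻¹ := by rw [Subgroup.mem_center_iff.mp hz b]
    _ = ⁅a, b⁆ := by group

theorem commutatorElement_mul_mem_center_right {z : G} (hz : z ∈ Subgroup.center G) (a b : G) :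
    ⁅a, b * z⁆ = ⁅a, b⁆ := by
  rw [← commutatorElement_inv, commutatorElement_mul_mem_center_left hz, commutatorElement_inv]

namespace MonoidHom

def IsCentral (φ : G →* G) : Prop :=
  ∀ g, g⁻¹ * φ g ∈ Subgroup.center G

theorem IsCentral.map_eq_self_of_mem_commutator {φ : G →* G} (hφ : φ.IsCentral) {x : G}
    (hx : x ∈ commutator G) : φ x = x := by
  suffices commutator G ≤ φ.eqLocus (MonoidHom.id G) from this hx
  rw [commutator_def, Subgroup.commutator_le]
  rintro a - b -
  show φ ⁅a, b⁆ = ⁅a, b⁆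
  rw [map_commutatorElement, ← mul_inv_cancel_left a (φ a), ← mul_inv_cancel_left b (φ b),
    commutatorElement_mul_mem_center_left (hφ a), commutatorElement_mul_mem_center_right (hφ b)]

theorem IsCentral.comp_apply_eq_mul {α β : G →* G} (hα : α.IsCentral)
    (hβ : ∀ z ∈ Subgroup.center G, β z = z) (g : G) : β.comp α g = β g * (g⁻¹ * α g) := by
  conv_lhs => rw [comp_apply, ← mul_inv_cancel_left g (α g), map_mul, hβ _ (hα g)]

theorem IsCentral.comp_comm {φ ψ : G →* G} (hφ : φ.IsCentral) (hψ : ψ.IsCentral)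
    (hφZ : ∀ z ∈ Subgroup.center G, φ z = z) (hψZ : ∀ z ∈ Subgroup.center G, ψ z = z) :
    φ.comp ψ = ψ.comp φ := by
  ext g
  rw [hψ.comp_apply_eq_mul hφZ, hφ.comp_apply_eq_mul hψZ]
  calc φ g * (g⁻¹ * ψ g) = g * ((g⁻¹ * φ g) * (g⁻¹ * ψ g)) := by group
    _ = g * ((g⁻¹ * ψ g) * (g⁻¹ * φ g)) := by rw [Subgroup.mem_center_iff.mp (hφ g)]
    _ = ψ g * (g⁻¹ * φ g) := by group

end MonoidHom

end

/-- If every automorphism of `G` is central and `G' = Z(G)`, then `Aut(G)` is abelian. -/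
theorem stmt_11 {G : Type*} [Group G]
    (hcentral : ∀ φ : MulAut G, ∀ g : G, g⁻¹ * φ g ∈ Subgroup.center G)
    (hZ : commutator G = Subgroup.center G) :
    ∀ φ ψ : MulAut G, φ * ψ = ψ * φ := by
  intro φ ψ
  have hφ : (φ : G →* G).IsCentral := hcentral φ
  have hψ : (ψ : G →* G).IsCentral := hcentral ψ
  have hφZ : ∀ z ∈ Subgroup.center G, φ z = z := fun z hz =>
    hφ.map_eq_self_of_mem_commutator (hZ ▸ hz)
  have hψZ : ∀ z ∈ Subgroup.center G, ψ z = z := fun z hz =>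
    hψ.map_eq_self_of_mem_commutator (hZ ▸ hz)
  ext g
  exact DFunLike.congr_fun (hφ.comp_comm hψ hφZ hψZ) g
end

section
/- The binary operation on Z_{p^{r+t}}³ defined by (i,j,k)·(i',j',k') = (i+i'−i'j·p^r t₁₁−i'k·p^r t₂₁−j'k·p^r t₃₁, j+j'−i'j·p^r t₁₂−i'k·p^r t₂₂−j'k·p^r t₃₂, k+k'−i'j·p^r t₁₃−i'k·p^r t₂₃−j'k·p^r t₃₃) makes Z_{p^{r+t}}³ into a group. -/
/-- The binary operation on `Z_{p^{r+t}}³` defined by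
`(i,j,k)·(i',j',k') = (i+i'−i'j·p^r t₁₁−i'k·p^r t₂₁−j'k·p^r t₃₁, …)`. -/
def Emul (p r t : ℕ) (T : Matrix (Fin 3) (Fin 3) ℤ)
    (x y : ZMod (p ^ (r + t)) × ZMod (p ^ (r + t)) × ZMod (p ^ (r + t))) :
    ZMod (p ^ (r + t)) × ZMod (p ^ (r + t)) × ZMod (p ^ (r + t)) :=
  (x.1 + y.1 - y.1 * x.2.1 * (((p : ℤ) ^ r * T 0 0 : ℤ) : ZMod (p ^ (r + t)))
      - y.1 * x.2.2 * (((p : ℤ) ^ r * T 1 0 : ℤ) : ZMod (p ^ (r + t)))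
      - y.2.1 * x.2.2 * (((p : ℤ) ^ r * T 2 0 : ℤ) : ZMod (p ^ (r + t))),
   x.2.1 + y.2.1 - y.1 * x.2.1 * (((p : ℤ) ^ r * T 0 1 : ℤ) : ZMod (p ^ (r + t)))
      - y.1 * x.2.2 * (((p : ℤ) ^ r * T 1 1 : ℤ) : ZMod (p ^ (r + t)))
      - y.2.1 * x.2.2 * (((p : ℤ) ^ r * T 2 1 : ℤ) : ZMod (p ^ (r + t))),
   x.2.2 + y.2.2 - y.1 * x.2.1 * (((p : ℤ) ^ r * T 0 2 : ℤ) : ZMod (p ^ (r + t)))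
      - y.1 * x.2.2 * (((p : ℤ) ^ r * T 1 2 : ℤ) : ZMod (p ^ (r + t)))
      - y.2.1 * x.2.2 * (((p : ℤ) ^ r * T 2 2 : ℤ) : ZMod (p ^ (r + t))))

/-!
The product has the shape `x ⋆ y = x + y - ε • Q x y` with `Q` bilinear and `ε = p ^ r`, and
`ε ^ 2 = p ^ (2 r)` vanishes modulo `p ^ (r + t)` because `t ≤ r`. Any such square-zero
deformation of addition is a group law: expanding `Q (x ⋆ y) z` by bilinearity, the correction
term is a multiple of `ε`, so it dies after multiplication by `ε`, and both bracketings of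
`x ⋆ y ⋆ z` equal `x + y + z - ε • (Q x y + Q x z + Q y z)`. The inverse of `x` is
`-x - ε • Q x x`.
-/

section DeformedMul

variable {R M : Type*} [CommRing R] [AddCommGroup M] [Module R M]

def deformedMul (ε : R) (Q : M →ₗ[R] M →ₗ[R] M) (x y : M) : M :=
  x + y - ε • Q x y

def deformedInv (ε : R) (Q : M →ₗ[R] M →ₗ[R] M) (x : M) : M :=
  -x - ε • Q x x

variable {ε : R} (Q : M →ₗ[R] M →ₗ[R] M)

lemma smul_smul_eq_zero_of_mul_self_eq_zero (hε : ε * ε = 0) (m : M) : ε • ε • m = 0 := by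
  rw [smul_smul, hε, zero_smul]

lemma smul_apply_deformedMul_left (hε : ε * ε = 0) (x y z : M) :
    ε • Q (deformedMul ε Q x y) z = ε • Q x z + ε • Q y z := by
  simp only [deformedMul, map_sub, map_add, map_smul, LinearMap.sub_apply, LinearMap.add_apply,
    LinearMap.smul_apply, smul_sub, smul_add, smul_smul_eq_zero_of_mul_self_eq_zero hε, sub_zero]

lemma smul_apply_deformedMul_right (hε : ε * ε = 0) (x y z : M) :
    ε • Q x (deformedMul ε Q y z) = ε • Q x y + ε • Q x z := by
  simp only [deformedMul, map_sub, map_add, map_smul, smul_sub, smul_add,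
    smul_smul_eq_zero_of_mul_self_eq_zero hε, sub_zero]

lemma deformedMul_assoc (hε : ε * ε = 0) (x y z : M) :
    deformedMul ε Q (deformedMul ε Q x y) z = deformedMul ε Q x (deformedMul ε Q y z) := by
  change deformedMul ε Q x y + z - ε • Q (deformedMul ε Q x y) z =
    x + deformedMul ε Q y z - ε • Q x (deformedMul ε Q y z)
  rw [smul_apply_deformedMul_left Q hε, smul_apply_deformedMul_right Q hε]
  simp only [deformedMul]
  abel

lemma deformedMul_zero (x : M) : deformedMul ε Q x 0 = x := by
  simp [deformedMul]

lemma zero_deformedMul (x : M) : deformedMul ε Q 0 x = x := by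
  simp [deformedMul]

lemma deformedMul_deformedInv (hε : ε * ε = 0) (x : M) :
    deformedMul ε Q x (deformedInv ε Q x) = 0 := by
  simp only [deformedMul, deformedInv, map_sub, map_neg, map_smul,
    smul_sub, smul_neg, smul_smul_eq_zero_of_mul_self_eq_zero hε]
  abel

lemma deformedInv_deformedMul (hε : ε * ε = 0) (x : M) :
    deformedMul ε Q (deformedInv ε Q x) x = 0 := by
  simp only [deformedMul, deformedInv, map_sub, map_neg, map_smul, LinearMap.sub_apply,
    LinearMap.neg_apply, LinearMap.smul_apply, smul_sub, smul_neg,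
    smul_smul_eq_zero_of_mul_self_eq_zero hε]
  abel

end DeformedMul

def crossTermMap {R : Type*} [CommRing R] (c : Fin 3 → R × R × R) :
    (R × R × R) →ₗ[R] (R × R × R) →ₗ[R] (R × R × R) :=
  LinearMap.mk₂ R (fun x y => (y.1 * x.2.1) • c 0 + (y.1 * x.2.2) • c 1 + (y.2.1 * x.2.2) • c 2)
    (fun _ _ _ => by simp only [Prod.fst_add, Prod.snd_add]; module)
    (fun _ _ _ => by simp only [Prod.smul_fst, Prod.smul_snd, smul_eq_mul]; module)
    (fun _ _ _ => by simp only [Prod.fst_add, Prod.snd_add]; module)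
    (fun _ _ _ => by simp only [Prod.smul_fst, Prod.smul_snd, smul_eq_mul]; module)

lemma natCast_pow_mul_self_eq_zero {p r t : ℕ} (htr : t ≤ r) :
    (p : ZMod (p ^ (r + t))) ^ r * (p : ZMod (p ^ (r + t))) ^ r = 0 := by
  rw [← pow_add, ← Nat.cast_pow, ZMod.natCast_eq_zero_iff]
  exact pow_dvd_pow p (by omega)

lemma Emul_eq_deformedMul (p r t : ℕ) (T : Matrix (Fin 3) (Fin 3) ℤ)
    (x y : ZMod (p ^ (r + t)) × ZMod (p ^ (r + t)) × ZMod (p ^ (r + t))) :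
    Emul p r t T x y = deformedMul ((p : ZMod (p ^ (r + t))) ^ r)
      (crossTermMap fun i => ((T i 0 : ZMod (p ^ (r + t))), (T i 1 : ZMod (p ^ (r + t))),
        (T i 2 : ZMod (p ^ (r + t))))) x y := by
  simp only [Emul, deformedMul, crossTermMap, LinearMap.mk₂_apply, Prod.ext_iff, Prod.fst_sub,
    Prod.snd_sub, Prod.fst_add, Prod.snd_add, Prod.smul_fst, Prod.smul_snd, smul_eq_mul]
  push_cast
  refine ⟨by ring, by ring, by ring⟩

theorem stmt_18_general (p r t : ℕ) (htr : t ≤ r)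
    (T : Matrix (Fin 3) (Fin 3) ℤ) :
    (∀ x y z, Emul p r t T (Emul p r t T x y) z = Emul p r t T x (Emul p r t T y z)) ∧
      (∀ x, Emul p r t T x (0, 0, 0) = x) ∧ (∀ x, Emul p r t T (0, 0, 0) x = x) ∧
      (∀ x, ∃ y, Emul p r t T x y = (0, 0, 0) ∧ Emul p r t T y x = (0, 0, 0)) := by
  have hε := natCast_pow_mul_self_eq_zero (p := p) htr
  simp only [Emul_eq_deformedMul]
  exact ⟨deformedMul_assoc _ hε, deformedMul_zero _, zero_deformedMul _,
    fun x => ⟨_, deformedMul_deformedInv _ hε x, deformedInv_deformedMul _ hε x⟩⟩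

/-- This binary operation makes `Z_{p^{r+t}}³` into a group: it is associative, has
identity `(0,0,0)` and two-sided inverses. -/
theorem stmt_18 (p r t : ℕ) (hp : p.Prime) (ht : 1 ≤ t) (htr : t ≤ r)
    (T : Matrix (Fin 3) (Fin 3) ℤ)
    (hT : IsUnit ((T.map (Int.cast : ℤ → ZMod (p ^ t))).det)) :
    (∀ x y z, Emul p r t T (Emul p r t T x y) z = Emul p r t T x (Emul p r t T y z)) ∧
      (∀ x, Emul p r t T x (0, 0, 0) = x) ∧ (∀ x, Emul p r t T (0, 0, 0) x = x) ∧
      (∀ x, ∃ y, Emul p r t T x y = (0, 0, 0) ∧ Emul p r t T y x = (0, 0, 0)) :=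
  stmt_18_general p r t htr T
end
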